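/- arXiv:0710.3817 — 4 statements merged into one kernel-verified Lean document; each statement's English description precedes it below -/
import Mathlib

section
/- Let M, n, p be positive natural numbers and let A be a real M×n matrix and B a real M×p matrix. If the matrix A Aᵀ − B Bᵀ is positive semidefinite, then there exists a real n×p matrix T such that A T = B and the matrix 1 − Tᵀ T is positive semidefinite (i.e., T is a contraction). -/
/-!
The Loewner inequality `A Aᵀ ≥ B Bᵀ` says `‖Bᵀ v‖ ≤ ‖Aᵀ v‖` for every `v`. Hence `Aᵀ v ↦ Bᵀ v` is
a well-defined contraction on the range of `Aᵀ`; precomposed with the orthogonal projection onto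
that range it becomes a contraction `C` of the whole space with `C Aᵀ = Bᵀ`, and `T = Cᵀ` works
because the adjoint of a contraction is a contraction (Douglas' factorisation lemma).
-/

open Matrix WithLp
open scoped ComplexOrder

namespace LinearMap

theorem ker_le_ker_of_norm_le {R E F G : Type*} [Semiring R] [AddCommMonoid E] [Module R E]
    [SeminormedAddCommGroup F] [Module R F] [NormedAddCommGroup G] [Module R G]
    {f : E →ₗ[R] F} {g : E →ₗ[R] G} (hfg : ∀ v, ‖g v‖ ≤ ‖f v‖) : ker f ≤ ker g := fun v hv ↦ by
  simpa [mem_ker.mp hv] using hfg v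

variable {𝕜 E F G : Type*} [RCLike 𝕜] [AddCommGroup E] [Module 𝕜 E]
  [NormedAddCommGroup F] [InnerProductSpace 𝕜 F] [NormedAddCommGroup G] [NormedSpace 𝕜 G]

theorem exists_contraction_comp_eq_of_norm_le (f : E →ₗ[𝕜] F) (g : E →ₗ[𝕜] G)
    [(range f).HasOrthogonalProjection] (hfg : ∀ v, ‖g v‖ ≤ ‖f v‖) :
    ∃ C : F →L[𝕜] G, ‖C‖ ≤ 1 ∧ ∀ v, C (f v) = g v := by
  set C₀ : range f →ₗ[𝕜] G :=
    (ker f).liftQ g (ker_le_ker_of_norm_le hfg) ∘ₗ f.quotKerEquivRange.symm.toLinearMap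
  have hC₀ : ∀ v, C₀ ⟨f v, mem_range_self f v⟩ = g v := fun v ↦ by
    simp [C₀, quotKerEquivRange_symm_apply_image]
  have hC₀_le : ∀ w, ‖C₀ w‖ ≤ 1 * ‖w‖ := by
    rintro ⟨_, v, rfl⟩
    simpa [hC₀] using hfg v
  refine ⟨(C₀.mkContinuous 1 hC₀_le).comp (range f).orthogonalProjectionOnto, ?_, fun v ↦ ?_⟩
  · calc _ ≤ ‖C₀.mkContinuous 1 hC₀_le‖ * ‖(range f).orthogonalProjectionOnto‖ :=
          ContinuousLinearMap.opNorm_comp_le _ _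
      _ ≤ 1 * 1 := by
          gcongr
          · exact mkContinuous_norm_le _ zero_le_one _
          · exact Submodule.orthogonalProjectionOnto_norm_le _
      _ = 1 := one_mul 1
  · simp [Submodule.orthogonalProjectionOnto_mem_subspace_eq_self ⟨f v, mem_range_self f v⟩, hC₀]

end LinearMap

namespace ContinuousLinearMap

variable {𝕜 E F G : Type*} [RCLike 𝕜]
  [NormedAddCommGroup E] [InnerProductSpace 𝕜 E] [CompleteSpace E]
  [NormedAddCommGroup F] [InnerProductSpace 𝕜 F] [CompleteSpace F]
  [NormedAddCommGroup G] [InnerProductSpace 𝕜 G] [CompleteSpace G]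

theorem exists_contraction_comp_eq_of_norm_adjoint_le (A : F →L[𝕜] E) (B : G →L[𝕜] E)
    [(adjoint A).range.HasOrthogonalProjection] (hAB : ∀ v, ‖adjoint B v‖ ≤ ‖adjoint A v‖) :
    ∃ T : G →L[𝕜] F, ‖T‖ ≤ 1 ∧ A ∘L T = B := by
  obtain ⟨C, hC, hCA⟩ := LinearMap.exists_contraction_comp_eq_of_norm_le
    (adjoint A).toLinearMap (adjoint B).toLinearMap hAB
  refine ⟨adjoint C, by rwa [LinearIsometryEquiv.norm_map], ?_⟩
  have hCA' : C ∘L adjoint A = adjoint B := ext hCA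
  rw [← adjoint_adjoint A, ← adjoint_comp, hCA', adjoint_adjoint]

end ContinuousLinearMap

namespace Matrix

variable {𝕜 m n p : Type*} [RCLike 𝕜] [Fintype m] [Fintype n] [Fintype p] [DecidableEq n]

theorem star_dotProduct_conjTranspose_mul_self_mulVec (X : Matrix m n 𝕜) (x : n → 𝕜) :
    star x ⬝ᵥ ((Xᴴ * X) *ᵥ x) = (‖toEuclideanLin X (toLp 2 x)‖ : 𝕜) ^ 2 := by
  rw [← inner_self_eq_norm_sq_to_K, EuclideanSpace.inner_eq_star_dotProduct, ← mulVec_mulVec,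
    dotProduct_mulVec, ← star_mulVec, dotProduct_comm]
  rfl

theorem posSemidef_conjTranspose_mul_self_sub_iff (X : Matrix m n 𝕜) (Y : Matrix p n 𝕜) :
    (Xᴴ * X - Yᴴ * Y).PosSemidef ↔
      ∀ v : EuclideanSpace 𝕜 n, ‖toEuclideanLin Y v‖ ≤ ‖toEuclideanLin X v‖ := by
  have hHerm : (Xᴴ * X - Yᴴ * Y).IsHermitian :=
    (isHermitian_conjTranspose_mul_self X).sub (isHermitian_conjTranspose_mul_self Y)
  simp only [posSemidef_iff_dotProduct_mulVec, hHerm, true_and, sub_mulVec, dotProduct_sub,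
    star_dotProduct_conjTranspose_mul_self_mulVec, sub_nonneg]
  refine (forall_congr' fun x ↦ ?_).trans (toLp_surjective 2).forall.symm
  rw [← RCLike.ofReal_pow, ← RCLike.ofReal_pow, RCLike.ofReal_le_ofReal,
    sq_le_sq₀ (norm_nonneg _) (norm_nonneg _)]

theorem exists_mul_eq_of_posSemidef_mul_conjTranspose_sub [DecidableEq m] [DecidableEq p]
    (A : Matrix m n 𝕜) (B : Matrix m p 𝕜) (h : (A * Aᴴ - B * Bᴴ).PosSemidef) :
    ∃ T : Matrix n p 𝕜, A * T = B ∧ (1 - Tᴴ * T).PosSemidef := by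
  set a := (toEuclideanLin A).toContinuousLinearMap
  set b := (toEuclideanLin B).toContinuousLinearMap
  have hab : ∀ v, ‖ContinuousLinearMap.adjoint b v‖ ≤ ‖ContinuousLinearMap.adjoint a v‖ := by
    simpa [a, b, ← LinearMap.adjoint_toContinuousLinearMap,
      ← toEuclideanLin_conjTranspose_eq_adjoint] using
      (posSemidef_conjTranspose_mul_self_sub_iff Aᴴ Bᴴ).mp (by simpa using h)
  obtain ⟨T, hT, hAT⟩ := ContinuousLinearMap.exists_contraction_comp_eq_of_norm_adjoint_le a b hab
  refine ⟨toEuclideanLin.symm T.toLinearMap, ?_, ?_⟩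
  · apply toEuclideanLin.injective
    rw [toLpLin_mul_same, LinearEquiv.apply_symm_apply]
    exact congrArg ContinuousLinearMap.toLinearMap hAT
  · have hT' : ∀ v, ‖toEuclideanLin (toEuclideanLin.symm T.toLinearMap) v‖ ≤
        ‖toEuclideanLin (1 : Matrix p p 𝕜) v‖ := fun v ↦ by
      rw [LinearEquiv.apply_symm_apply, toLpLin_one]
      simpa using T.le_of_opNorm_le hT v
    simpa only [conjTranspose_one, one_mul] using
      (posSemidef_conjTranspose_mul_self_sub_iff 1 _).mpr hT'

end Matrix

theorem gram_domination_contraction_general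
    (M n p : ℕ)
    (A : Matrix (Fin M) (Fin n) ℝ) (B : Matrix (Fin M) (Fin p) ℝ)
    (h : (A * Aᵀ - B * Bᵀ).PosSemidef) :
    ∃ T : Matrix (Fin n) (Fin p) ℝ, A * T = B ∧ (1 - Tᵀ * T).PosSemidef := by
  simpa only [conjTranspose_eq_transpose_of_trivial] using
    exists_mul_eq_of_posSemidef_mul_conjTranspose_sub A B
      (by simpa only [conjTranspose_eq_transpose_of_trivial] using h)

/-- Gram-domination lemma: if `A Aᵀ - B Bᵀ` is positive semidefinite, then the rows of `B`
are images of the rows of `A` under a common linear contraction `T`. -/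
theorem gram_domination_contraction
    (M n p : ℕ) (hM : 0 < M) (hn : 0 < n) (hp : 0 < p)
    (A : Matrix (Fin M) (Fin n) ℝ) (B : Matrix (Fin M) (Fin p) ℝ)
    (h : (A * Aᵀ - B * Bᵀ).PosSemidef) :
    ∃ T : Matrix (Fin n) (Fin p) ℝ, A * T = B ∧ (1 - Tᵀ * T).PosSemidef :=
  gram_domination_contraction_general M n p A B h
end

section
/- Let M, n, p be positive natural numbers, let A be a real M×n matrix, B a real M×p matrix, and σ > 0. If A Aᵀ − B Bᵀ is positive semidefinite, then there exists a Markov kernel κ from ℝⁿ (EuclideanSpace ℝ (Fin n)) to ℝᵖ such that for every β ∈ ℝᴹ, the measure obtained by drawing x from the multivariate Gaussian N(Aᵀβ, σ²·Iₙ) and then applying κ (i.e., the bind of N(Aᵀβ, σ²Iₙ) with κ) equals the multivariate Gaussian N(Bᵀβ, σ²·Iₚ). In other words, the linear normal experiment with design matrix A is Blackwell-sufficient for the one with design matrix B. -/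
/-!
Loewner domination `B Bᵀ ≤ A Aᵀ` says exactly that `‖Bᵀ β‖ ≤ ‖Aᵀ β‖` for every `β`, so
`Aᵀ β ↦ Bᵀ β` is a well-defined contraction on the range of `Aᵀ`; precomposed with the orthogonal
projection onto that range it becomes a contraction `L` of `ℝⁿ` into `ℝᵖ` with `L Aᵀ = Bᵀ`.
The kernel `x ↦ N(L x, σ² (I - L Lᵀ))` then does the job: if `x ~ N(Aᵀ β, σ² I)`, then
`L x ~ N(Bᵀ β, σ² L Lᵀ)`, and adding independent noise of covariance `σ² (I - L Lᵀ)` produces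
`N(Bᵀ β, σ² I)`. Both Gaussian identities are checked on characteristic functions.
-/

open Matrix MeasureTheory ProbabilityTheory

/-- The multivariate Gaussian measure `N(μ, σ² I)` on `EuclideanSpace ℝ (Fin n)`,
defined via its density with respect to Lebesgue measure. -/
noncomputable def gaussianEuclidean (n : ℕ) (μ : EuclideanSpace ℝ (Fin n)) (σ : ℝ) :
    Measure (EuclideanSpace ℝ (Fin n)) :=
  volume.withDensity fun x =>
    ENNReal.ofReal ((2 * Real.pi * σ ^ 2) ^ (-(n : ℝ) / 2) *
      Real.exp (-‖x - μ‖ ^ 2 / (2 * σ ^ 2)))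

open WithLp
open scoped RealInnerProductSpace

lemma MeasureTheory.Measure.bind_deterministic_prod_const_map_add {X E : Type*}
    [MeasurableSpace X] [MeasurableSpace E] [AddCommMonoid E] [MeasurableAdd₂ E]
    (μ : Measure X) [SFinite μ] {f : X → E} (hf : Measurable f) (ν : Measure E) [SFinite ν] :
    μ.bind ((Kernel.deterministic f hf ×ₖ Kernel.const X ν).map fun q ↦ q.1 + q.2) =
      μ.map f ∗ ν := by
  have h : Kernel.deterministic f hf ×ₖ Kernel.const X ν =
      (Kernel.id ×ₖ Kernel.const E ν) ∘ₖ Kernel.deterministic f hf := by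
    rw [Kernel.prod_const_comp, Kernel.id_comp]
  rw [← Measure.map_comp _ _ (by fun_prop), h, ← Measure.comp_assoc,
    Measure.deterministic_comp_eq_map, ← Measure.compProd_eq_comp_prod, Measure.compProd_const]
  rfl

section InnerProductSpace

variable {E F : Type*} [NormedAddCommGroup E] [InnerProductSpace ℝ E] [FiniteDimensional ℝ E]
  [NormedAddCommGroup F] [InnerProductSpace ℝ F]

lemma charFun_map_linearMap [MeasurableSpace E] [BorelSpace E] [FiniteDimensional ℝ F]
    [MeasurableSpace F] [BorelSpace F] (μ : Measure E) (L : E →ₗ[ℝ] F) (t : F) :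
    charFun (μ.map L) t = charFun μ (L.adjoint t) := by
  rw [charFun_apply, charFun_apply, integral_map (by fun_prop) (by fun_prop)]
  simp_rw [LinearMap.adjoint_inner_right]

lemma LinearMap.norm_adjoint_apply_le [FiniteDimensional ℝ F] {T : E →ₗ[ℝ] F}
    (hT : ∀ x, ‖T x‖ ≤ ‖x‖) (y : F) : ‖T.adjoint y‖ ≤ ‖y‖ := by
  have h : ‖T.adjoint y‖ ^ 2 ≤ ‖T.adjoint y‖ * ‖y‖ :=
    calc ‖T.adjoint y‖ ^ 2 = ⟪T (T.adjoint y), y⟫ := by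
          rw [← real_inner_self_eq_norm_sq, LinearMap.adjoint_inner_right]
      _ ≤ ‖T (T.adjoint y)‖ * ‖y‖ := real_inner_le_norm _ _
      _ ≤ ‖T.adjoint y‖ * ‖y‖ := by gcongr; exact hT _
  nlinarith [norm_nonneg (T.adjoint y), norm_nonneg y]

/-- A right inverse `r` of `ψ` onto its range satisfies `φ ∘ r ∘ ψ = φ`, because the norm
inequality forces `ker ψ ≤ ker φ`; killing the orthogonal complement of the range keeps the
extension a contraction. -/
lemma exists_contraction_comp_eq_of_norm_le {G : Type*} [NormedAddCommGroup G]
    [InnerProductSpace ℝ G] (ψ : G →ₗ[ℝ] E) (φ : G →ₗ[ℝ] F) (h : ∀ g, ‖φ g‖ ≤ ‖ψ g‖) :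
    ∃ T : E →ₗ[ℝ] F, (∀ x, ‖T x‖ ≤ ‖x‖) ∧ T ∘ₗ ψ = φ := by
  obtain ⟨r, hr⟩ := ψ.rangeRestrict.exists_rightInverse_of_surjective ψ.range_rangeRestrict
  have hψr : ∀ v, ψ (r v) = v := fun v ↦ congrArg Subtype.val (LinearMap.congr_fun hr v)
  have hφr : ∀ g, φ (r (ψ.rangeRestrict g)) = φ g := by
    intro g
    have := h (r (ψ.rangeRestrict g) - g)
    rwa [map_sub, map_sub, hψr, LinearMap.codRestrict_apply, sub_self, norm_zero,
      norm_le_zero_iff, sub_eq_zero] at this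
  set P := (LinearMap.range ψ).orthogonalProjectionOnto
  refine ⟨φ ∘ₗ r ∘ₗ P.toLinearMap, fun x ↦ ?_, ?_⟩
  · calc ‖φ (r (P x))‖ ≤ ‖ψ (r (P x))‖ := h _
      _ ≤ ‖x‖ := by rw [hψr]; exact (LinearMap.range ψ).norm_orthogonalProjectionOnto_apply_le x
  · ext g
    simp only [LinearMap.coe_comp, Function.comp_apply, ContinuousLinearMap.coe_coe]
    rw [← hφr g]
    congr 2
    exact (LinearMap.range ψ).orthogonalProjectionOnto_mem_subspace_eq_self (ψ.rangeRestrict g)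

end InnerProductSpace

section Matrix

variable {m n p : Type*} [Fintype m] [Fintype n] [Fintype p]

lemma norm_toEuclideanLin_sq [DecidableEq n] (C : Matrix m n ℝ) (x : EuclideanSpace ℝ n) :
    ‖toEuclideanLin C x‖ ^ 2 = ofLp x ⬝ᵥ (Cᵀ * C) *ᵥ ofLp x := by
  rw [← real_inner_self_eq_norm_sq, EuclideanSpace.inner_eq_star_dotProduct, star_trivial,
    ofLp_toLpLin, toLin'_apply, ← mulVec_mulVec, dotProduct_mulVec _ Cᵀ, vecMul_transpose]

lemma norm_toEuclideanLin_transpose_le_of_posSemidef_sub [DecidableEq m] {A : Matrix m n ℝ}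
    {B : Matrix m p ℝ} (h : (A * Aᵀ - B * Bᵀ).PosSemidef) (β : EuclideanSpace ℝ m) :
    ‖toEuclideanLin Bᵀ β‖ ≤ ‖toEuclideanLin Aᵀ β‖ := by
  have hquad := h.dotProduct_mulVec_nonneg (ofLp β)
  rw [star_trivial, sub_mulVec, dotProduct_sub, sub_nonneg] at hquad
  rwa [← pow_le_pow_iff_left₀ (norm_nonneg _) (norm_nonneg _) two_ne_zero,
    norm_toEuclideanLin_sq, norm_toEuclideanLin_sq, transpose_transpose, transpose_transpose]

lemma posSemidef_one_sub_mul_transpose_of_norm_le [DecidableEq m] [DecidableEq n]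
    {L : Matrix m n ℝ} (hL : ∀ x, ‖toEuclideanLin L x‖ ≤ ‖x‖) : (1 - L * Lᵀ).PosSemidef := by
  refine posSemidef_iff_dotProduct_mulVec.2 ⟨?_, fun y ↦ ?_⟩
  · simpa using isHermitian_one.sub (isHermitian_mul_conjTranspose_self L)
  · have hLt := LinearMap.norm_adjoint_apply_le hL (toLp 2 y)
    rw [← toEuclideanLin_conjTranspose_eq_adjoint, conjTranspose_eq_transpose_of_trivial,
      ← pow_le_pow_iff_left₀ (norm_nonneg _) (norm_nonneg _) two_ne_zero,
      norm_toEuclideanLin_sq, ← real_inner_self_eq_norm_sq, EuclideanSpace.inner_toLp_toLp,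
      transpose_transpose] at hLt
    rwa [star_trivial, sub_mulVec, one_mulVec, dotProduct_sub, sub_nonneg]

end Matrix

section MultivariateGaussian

variable {ι κ : Type*} [Fintype ι] [DecidableEq ι] [Fintype κ] [DecidableEq κ]

lemma multivariateGaussian_map_toEuclideanLin {μ : EuclideanSpace ℝ ι} {S : Matrix ι ι ℝ}
    (hS : S.PosSemidef) (L : Matrix κ ι ℝ) :
    (multivariateGaussian μ S).map (toEuclideanLin L) =
      multivariateGaussian (toEuclideanLin L μ) (L * S * Lᵀ) := by
  have hLS : (L * S * Lᵀ).PosSemidef := by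
    simpa only [conjTranspose_eq_transpose_of_trivial] using hS.mul_mul_conjTranspose_same L
  refine Measure.ext_of_charFun (funext fun t ↦ ?_)
  rw [charFun_map_linearMap, charFun_multivariateGaussian hS, charFun_multivariateGaussian hLS,
    LinearMap.adjoint_inner_left, ← toEuclideanLin_conjTranspose_eq_adjoint, ofLp_toLpLin,
    toLin'_apply, conjTranspose_eq_transpose_of_trivial, ← mulVec_mulVec, ← mulVec_mulVec,
    dotProduct_mulVec _ L, ← mulVec_transpose]

lemma multivariateGaussian_conv {μ₁ μ₂ : EuclideanSpace ℝ ι} {S₁ S₂ : Matrix ι ι ℝ}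
    (hS₁ : S₁.PosSemidef) (hS₂ : S₂.PosSemidef) :
    multivariateGaussian μ₁ S₁ ∗ multivariateGaussian μ₂ S₂ =
      multivariateGaussian (μ₁ + μ₂) (S₁ + S₂) := by
  refine Measure.ext_of_charFun (funext fun t ↦ ?_)
  rw [charFun_conv, charFun_multivariateGaussian hS₁, charFun_multivariateGaussian hS₂,
    charFun_multivariateGaussian (hS₁.add hS₂), ← Complex.exp_add]
  congr 1
  simp only [inner_add_right, add_mulVec, dotProduct_add]
  push_cast
  ring

end MultivariateGaussian

lemma integral_cexp_neg_sq_norm_div_add_inner_mul_I {V : Type*} [NormedAddCommGroup V]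
    [InnerProductSpace ℝ V] [FiniteDimensional ℝ V] [MeasurableSpace V] [BorelSpace V] {σ : ℝ}
    (hσ : σ ≠ 0) (t : V) :
    ∫ x : V, Complex.exp (-‖x‖ ^ 2 / (2 * σ ^ 2) + ⟪t, x⟫ * Complex.I) =
      ((2 * Real.pi * σ ^ 2) ^ (Module.finrank ℝ V / 2 : ℝ) : ℝ) *
        Complex.exp (-(σ ^ 2 * ‖t‖ ^ 2) / 2) := by
  have hb : 0 < ((2 * σ ^ 2 : ℝ)⁻¹ : ℂ).re := by
    rw [← Complex.ofReal_inv, Complex.ofReal_re]; positivity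
  convert GaussianFourier.integral_cexp_neg_mul_sq_norm_add hb Complex.I t using 1
  · congr! 3 with x
    push_cast
    ring
  · rw [Complex.ofReal_cpow (by positivity)]
    congr 1
    · push_cast
      field_simp
    · rw [Complex.I_sq]
      congr 1
      push_cast
      field_simp
      ring

section GaussianEuclidean

variable {n : ℕ} (μ : EuclideanSpace ℝ (Fin n)) {σ : ℝ}

lemma charFun_gaussianEuclidean (hσ : σ ≠ 0) (t : EuclideanSpace ℝ (Fin n)) :
    charFun (gaussianEuclidean n μ σ) t =
      Complex.exp (⟪t, μ⟫ * Complex.I - σ ^ 2 * ‖t‖ ^ 2 / 2) := by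
  rw [charFun_apply, gaussianEuclidean, integral_withDensity_eq_integral_toReal_smul (by fun_prop)
    (ae_of_all _ fun _ ↦ ENNReal.ofReal_lt_top), ← integral_add_right_eq_self _ μ]
  set c : ℝ := (2 * Real.pi * σ ^ 2) ^ (-(n : ℝ) / 2)
  have hintegrand : ∀ x : EuclideanSpace ℝ (Fin n),
      (ENNReal.ofReal (c * Real.exp (-‖x + μ - μ‖ ^ 2 / (2 * σ ^ 2)))).toReal •
        Complex.exp (⟪x + μ, t⟫ * Complex.I) =
      (c * Complex.exp (⟪t, μ⟫ * Complex.I)) *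
        Complex.exp (-‖x‖ ^ 2 / (2 * σ ^ 2) + ⟪t, x⟫ * Complex.I) := by
    intro x
    rw [ENNReal.toReal_ofReal (by positivity), add_sub_cancel_right, Complex.real_smul,
      Complex.ofReal_mul, Complex.ofReal_exp, inner_add_left, real_inner_comm t, real_inner_comm t]
    simp only [mul_assoc, ← Complex.exp_add]
    congr 2
    push_cast
    ring
  have hmass : c * (2 * Real.pi * σ ^ 2) ^ (n / 2 : ℝ) = 1 := by
    rw [← Real.rpow_add (by positivity), neg_div, neg_add_cancel, Real.rpow_zero]
  simp_rw [hintegrand]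
  rw [integral_const_mul, integral_cexp_neg_sq_norm_div_add_inner_mul_I hσ,
    finrank_euclideanSpace_fin, mul_mul_mul_comm, ← Complex.ofReal_mul, hmass, Complex.ofReal_one,
    one_mul, ← Complex.exp_add]
  congr 1
  ring

/-- The total mass is read off the characteristic function at `0`; since `ENNReal.toReal ∞ = 0`,
the value `1` also rules out infinite mass. -/
lemma isProbabilityMeasure_gaussianEuclidean (hσ : σ ≠ 0) :
    IsProbabilityMeasure (gaussianEuclidean n μ σ) := by
  have h : (gaussianEuclidean n μ σ).real Set.univ = 1 := by
    simpa using charFun_gaussianEuclidean μ hσ 0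
  exact ⟨(ENNReal.toReal_eq_one_iff _).1 h⟩

lemma gaussianEuclidean_eq_multivariateGaussian (hσ : σ ≠ 0) :
    gaussianEuclidean n μ σ = multivariateGaussian μ (σ ^ 2 • 1) := by
  have := isProbabilityMeasure_gaussianEuclidean μ hσ
  refine Measure.ext_of_charFun (funext fun t ↦ ?_)
  have hquad : ofLp t ⬝ᵥ (σ ^ 2 • 1 : Matrix (Fin n) (Fin n) ℝ) *ᵥ ofLp t = σ ^ 2 * ‖t‖ ^ 2 := by
    rw [← real_inner_self_eq_norm_sq, EuclideanSpace.inner_eq_star_dotProduct, star_trivial,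
      smul_mulVec, one_mulVec, dotProduct_smul, smul_eq_mul]
  rw [charFun_gaussianEuclidean μ hσ, charFun_multivariateGaussian (.smul .one (sq_nonneg σ)),
    hquad]
  push_cast
  rfl

end GaussianEuclidean

theorem linear_normal_experiment_sufficient_general
    (M n p : ℕ)
    (A : Matrix (Fin M) (Fin n) ℝ) (B : Matrix (Fin M) (Fin p) ℝ)
    (σ : ℝ) (hσ : 0 < σ)
    (h : (A * Aᵀ - B * Bᵀ).PosSemidef) :
    ∃ κ : Kernel (EuclideanSpace ℝ (Fin n)) (EuclideanSpace ℝ (Fin p)),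
      IsMarkovKernel κ ∧
      ∀ β : Fin M → ℝ,
        (gaussianEuclidean n ((WithLp.equiv 2 (Fin n → ℝ)).symm (Aᵀ.mulVec β)) σ).bind κ =
          gaussianEuclidean p ((WithLp.equiv 2 (Fin p → ℝ)).symm (Bᵀ.mulVec β)) σ := by
  obtain ⟨T, hT, hTA⟩ := exists_contraction_comp_eq_of_norm_le (toEuclideanLin Aᵀ)
    (toEuclideanLin Bᵀ) (norm_toEuclideanLin_transpose_le_of_posSemidef_sub h)
  set L := toEuclideanLin.symm T
  have hLT : toEuclideanLin L = T := LinearEquiv.apply_symm_apply _ T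
  have hL : (1 - L * Lᵀ).PosSemidef := posSemidef_one_sub_mul_transpose_of_norm_le (hLT ▸ hT)
  refine ⟨(Kernel.deterministic (toEuclideanLin L) (by fun_prop) ×ₖ
    Kernel.const _ (multivariateGaussian 0 (σ ^ 2 • (1 - L * Lᵀ)))).map (fun q ↦ q.1 + q.2),
    Kernel.IsMarkovKernel.map _ (by fun_prop), fun β ↦ ?_⟩
  have hσ1 : (σ ^ 2 • 1 : Matrix (Fin n) (Fin n) ℝ).PosSemidef := .smul .one (sq_nonneg σ)
  rw [gaussianEuclidean_eq_multivariateGaussian _ hσ.ne',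
    gaussianEuclidean_eq_multivariateGaussian _ hσ.ne',
    Measure.bind_deterministic_prod_const_map_add, multivariateGaussian_map_toEuclideanLin hσ1,
    multivariateGaussian_conv (by simpa only [conjTranspose_eq_transpose_of_trivial] using
      hσ1.mul_mul_conjTranspose_same L) (hL.smul (sq_nonneg σ))]
  congr 1
  · rw [add_zero, hLT]
    exact LinearMap.congr_fun hTA (toLp 2 β)
  · rw [Matrix.mul_smul, Matrix.mul_one, Matrix.smul_mul, smul_sub, add_sub_cancel]

/-- Blackwell sufficiency of the linear normal experiment with design matrix `A` for the
one with design matrix `B`, under Loewner domination of the Gram matrices. -/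
theorem linear_normal_experiment_sufficient
    (M n p : ℕ) (hM : 0 < M) (hn : 0 < n) (hp : 0 < p)
    (A : Matrix (Fin M) (Fin n) ℝ) (B : Matrix (Fin M) (Fin p) ℝ)
    (σ : ℝ) (hσ : 0 < σ)
    (h : (A * Aᵀ - B * Bᵀ).PosSemidef) :
    ∃ κ : Kernel (EuclideanSpace ℝ (Fin n)) (EuclideanSpace ℝ (Fin p)),
      IsMarkovKernel κ ∧
      ∀ β : Fin M → ℝ,
        (gaussianEuclidean n ((WithLp.equiv 2 (Fin n → ℝ)).symm (Aᵀ.mulVec β)) σ).bind κ =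
          gaussianEuclidean p ((WithLp.equiv 2 (Fin p → ℝ)).symm (Bᵀ.mulVec β)) σ :=
  linear_normal_experiment_sufficient_general M n p A B σ hσ h
end

section
/- (Majorization implies smaller attainable average error probability.) Let A and B be n×m and n×k row-stochastic matrices representing the transfer matrices of two coding experiments with the same n messages, and suppose there exists an m×k row-stochastic matrix M with A M = B. Then for every prior probability vector p : Fin n → ℝ with p i ≥ 0 and Σᵢ p i = 1, the infimum over row-stochastic m×n decision matrices S of the average error probability Σᵢ p i · Σ_{x ∈ Fin m} A i x · (Σ_{j ≠ i} S x j) is at most the corresponding infimum over row-stochastic k×n decision matrices R of Σᵢ p i · Σ_{z ∈ Fin k} B i z · (Σ_{j ≠ i} R z j). -/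
open Matrix Finset

/-- A real matrix is row-stochastic if it has nonnegative entries and each row sums to 1. -/
def RowStochastic {n m : ℕ} (A : Matrix (Fin n) (Fin m) ℝ) : Prop :=
  (∀ i j, 0 ≤ A i j) ∧ ∀ i, ∑ j, A i j = 1

lemma rowStochastic_mul {a b c : ℕ} {X : Matrix (Fin a) (Fin b) ℝ} {Y : Matrix (Fin b) (Fin c) ℝ}
    (hX : RowStochastic X) (hY : RowStochastic Y) : RowStochastic (X * Y) := by
  constructor
  · intro i j
    rw [Matrix.mul_apply]
    exact Finset.sum_nonneg fun x _ => mul_nonneg (hX.1 i x) (hY.1 x j)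
  · intro i
    simp only [Matrix.mul_apply]
    rw [Finset.sum_comm]
    simp_rw [← Finset.mul_sum, hY.2, mul_one]
    exact hX.2 i

/-- Matrix majorization implies smaller attainable average (Bayes) error probability:
if `A M = B` with `M` row-stochastic, then for every prior `p` the infimum over randomized
decoders of the average error probability of the experiment `A` is at most the corresponding
infimum for the experiment `B`. -/
theorem majorization_average_error
    (n m k : ℕ) (A : Matrix (Fin n) (Fin m) ℝ) (B : Matrix (Fin n) (Fin k) ℝ)
    (hA : RowStochastic A) (hB : RowStochastic B)
    (M : Matrix (Fin m) (Fin k) ℝ) (hM : RowStochastic M) (hAM : A * M = B)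
    (p : Fin n → ℝ) (hp : ∀ i, 0 ≤ p i) (hp1 : ∑ i, p i = 1) :
    sInf {e : ℝ | ∃ S : Matrix (Fin m) (Fin n) ℝ, RowStochastic S ∧
        e = ∑ i : Fin n, p i * ∑ x : Fin m, A i x * ∑ j ∈ univ.erase i, S x j} ≤
      sInf {e : ℝ | ∃ R : Matrix (Fin k) (Fin n) ℝ, RowStochastic R ∧
        e = ∑ i : Fin n, p i * ∑ z : Fin k, B i z * ∑ j ∈ univ.erase i, R z j} := by
  have hn : 0 < n := by
    by_contra h
    push_neg at h
    interval_cases n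
    simp at hp1
  apply csInf_le_csInf
  · -- LHS set bounded below by 0
    refine ⟨0, fun e he => ?_⟩
    obtain ⟨S, hS, rfl⟩ := he
    apply Finset.sum_nonneg
    intro i _
    apply mul_nonneg (hp i)
    apply Finset.sum_nonneg
    intro x _
    apply mul_nonneg (hA.1 i x)
    exact Finset.sum_nonneg fun j _ => hS.1 x j
  · -- RHS set nonempty
    refine ⟨_, ⟨fun _ j => if j = ⟨0, hn⟩ then 1 else 0, ⟨?_, ?_⟩, rfl⟩⟩
    · intro i j; positivity
    · intro i; simp
  · -- subset
    rintro e ⟨R, hR, rfl⟩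
    refine ⟨M * R, rowStochastic_mul hM hR, ?_⟩
    congr 1
    funext i
    congr 1
    subst hAM
    simp only [Matrix.mul_apply]
    simp_rw [Finset.sum_mul, Finset.mul_sum, mul_assoc]
    rw [Finset.sum_comm]
    refine Finset.sum_congr rfl fun x _ => ?_
    rw [Finset.sum_comm]
end

section
/- (Comparison of dichotomies: majorization is equivalent to zonotope inclusion.) Let A be a 2×n row-stochastic matrix and B a 2×m row-stochastic matrix. Then there exists an n×m row-stochastic matrix M with A M = B if and only if Z(B) ⊆ Z(A), where Z(A) = {Σⱼ δⱼ aⱼ : δ ∈ [0,1]ⁿ} is the zonotope of A (with columns aⱼ) and Z(B) = {Σⱼ εⱼ bⱼ : ε ∈ [0,1]ᵐ} is the zonotope of B (with columns bⱼ). -/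
open Matrix Finset

/-- The zonotope of a `2 × n` matrix `A`: all combinations `∑ⱼ δⱼ aⱼ` of the columns `aⱼ`
of `A` with coefficients `δⱼ ∈ [0,1]`; equivalently the Minkowski sum of the segments
`conv(0, aⱼ)`. -/
def zonotope {n : ℕ} (A : Matrix (Fin 2) (Fin n) ℝ) : Set (Fin 2 → ℝ) :=
  {z | ∃ δ : Fin n → ℝ, (∀ j, δ j ∈ Set.Icc (0 : ℝ) 1) ∧
    z = ∑ j : Fin n, δ j • (fun i : Fin 2 => A i j)}

/-!
If `B = A * M`, then `M` maps `[0,1]ᵐ` into `[0,1]ⁿ`, so `Z(B) ⊆ Z(A)`. Conversely, the set of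
products `A * M` with `M` row-stochastic is compact and convex; if `B` lies outside, Hahn–Banach
gives `P` with `tr (P * B) > max_M tr (P * A * M) = ∑ⱼ maxₖ pₖ ⬝ aⱼ` (`pₖ` the rows of `P`).
On the nonnegative quadrant `φ x = maxₖ pₖ ⬝ x` is a linear function plus a nonnegative
combination of hinges `x ↦ max (u ⬝ x) 0`. The linear part has the same sum over the columns of
`A` and of `B`, as both are row-stochastic, and `∑ⱼ max (u ⬝ aⱼ) 0` is the support function of
`Z(A)` at `u`, so zonotope inclusion gives `∑ₖ φ bₖ ≤ ∑ⱼ φ aⱼ`: a contradiction.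
-/

section RowStochastic

variable {n m : ℕ}

lemma RowStochastic.mulVec_one {M : Matrix (Fin n) (Fin m) ℝ} (hM : RowStochastic M) :
    M *ᵥ 1 = 1 := by
  ext i
  simpa [mulVec, dotProduct] using hM.2 i

lemma RowStochastic.mulVec_mem_Icc {M : Matrix (Fin n) (Fin m) ℝ} (hM : RowStochastic M)
    {ε : Fin m → ℝ} (hε : ∀ k, ε k ∈ Set.Icc (0 : ℝ) 1) (j : Fin n) :
    (M *ᵥ ε) j ∈ Set.Icc (0 : ℝ) 1 := by
  simp only [mulVec, dotProduct]
  refine ⟨Finset.sum_nonneg fun k _ => mul_nonneg (hM.1 j k) (hε k).1, ?_⟩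
  calc ∑ k, M j k * ε k ≤ ∑ k, M j k := Finset.sum_le_sum fun k _ =>
        mul_le_of_le_one_right (hM.1 j k) (hε k).2
    _ = 1 := hM.2 j

lemma RowStochastic.nonempty [Nonempty (Fin n)] {M : Matrix (Fin n) (Fin m) ℝ}
    (hM : RowStochastic M) : Nonempty (Fin m) := by
  by_contra h
  rw [not_nonempty_iff] at h
  simpa using hM.2 (Classical.arbitrary _)

lemma setOf_rowStochastic_eq_pi :
    {M : Matrix (Fin n) (Fin m) ℝ | RowStochastic M} =
      Set.univ.pi fun _ => stdSimplex ℝ (Fin m) := by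
  ext M
  change _ ↔ ∀ i ∈ Set.univ, M i ∈ stdSimplex ℝ (Fin m)
  simp [RowStochastic, stdSimplex, forall_and]

lemma isCompact_setOf_rowStochastic :
    IsCompact {M : Matrix (Fin n) (Fin m) ℝ | RowStochastic M} := by
  rw [setOf_rowStochastic_eq_pi]
  exact isCompact_univ_pi fun _ => isCompact_stdSimplex ℝ (Fin m)

lemma convex_setOf_rowStochastic :
    Convex ℝ {M : Matrix (Fin n) (Fin m) ℝ | RowStochastic M} := by
  rw [setOf_rowStochastic_eq_pi]
  exact convex_pi fun _ _ => convex_stdSimplex ℝ _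

lemma rowStochastic_of_pi_single (κ : Fin n → Fin m) :
    RowStochastic (of fun j => Pi.single (κ j) (1 : ℝ)) := by
  refine ⟨fun j k => ?_, fun j => by simp⟩
  simp only [of_apply, Pi.single_apply]
  split_ifs <;> norm_num

lemma trace_mul_of_pi_single (C : Matrix (Fin m) (Fin n) ℝ) (κ : Fin n → Fin m) :
    (C * of fun j => Pi.single (κ j) (1 : ℝ)).trace = ∑ j, C (κ j) j := by
  rw [trace_mul_comm]
  simp [trace, mul_apply, Pi.single_apply]

end RowStochastic

section Zonotope

variable {n m : ℕ}

lemma mem_zonotope_iff {A : Matrix (Fin 2) (Fin n) ℝ} {z : Fin 2 → ℝ} :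
    z ∈ zonotope A ↔ ∃ δ : Fin n → ℝ, (∀ j, δ j ∈ Set.Icc (0 : ℝ) 1) ∧ z = A *ᵥ δ := by
  have : ∀ δ : Fin n → ℝ, ∑ j, δ j • (fun i : Fin 2 => A i j) = A *ᵥ δ := by
    intro δ
    ext i
    simp [mulVec, dotProduct, Finset.sum_apply, mul_comm]
  simp only [zonotope, Set.mem_ofPred_eq, this]

lemma zonotope_mul_subset (A : Matrix (Fin 2) (Fin n) ℝ) {M : Matrix (Fin n) (Fin m) ℝ}
    (hM : RowStochastic M) : zonotope (A * M) ⊆ zonotope A := by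
  intro z hz
  obtain ⟨ε, hε, rfl⟩ := mem_zonotope_iff.1 hz
  exact mem_zonotope_iff.2 ⟨M *ᵥ ε, hM.mulVec_mem_Icc hε, (mulVec_mulVec ε A M).symm⟩

lemma dotProduct_le_sum_max_zero {ι : Type*} [Fintype ι] (v : ι → ℝ) {δ : ι → ℝ}
    (hδ : ∀ j, δ j ∈ Set.Icc (0 : ℝ) 1) : v ⬝ᵥ δ ≤ ∑ j, max (v j) 0 :=
  Finset.sum_le_sum fun j _ =>
    (mul_le_mul_of_nonneg_right (le_max_left (v j) 0) (hδ j).1).trans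
      (mul_le_of_le_one_right (le_max_right _ _) (hδ j).2)

lemma exists_dotProduct_eq_sum_max_zero {ι : Type*} [Fintype ι] (v : ι → ℝ) :
    ∃ δ : ι → ℝ, (∀ j, δ j ∈ Set.Icc (0 : ℝ) 1) ∧ v ⬝ᵥ δ = ∑ j, max (v j) 0 := by
  classical
  refine ⟨fun j => if 0 ≤ v j then 1 else 0, fun j => by dsimp only; split_ifs <;> simp,
    Finset.sum_congr rfl fun j _ => ?_⟩
  dsimp only
  split_ifs with h
  · simp [h]
  · simp [(not_le.1 h).le]

theorem sum_max_vecMul_le_of_zonotope_subset {A : Matrix (Fin 2) (Fin n) ℝ}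
    {B : Matrix (Fin 2) (Fin m) ℝ} (h : zonotope B ⊆ zonotope A) (u : Fin 2 → ℝ) :
    ∑ k, max ((u ᵥ* B) k) 0 ≤ ∑ j, max ((u ᵥ* A) j) 0 := by
  obtain ⟨δ, hδ, hδeq⟩ := exists_dotProduct_eq_sum_max_zero (u ᵥ* B)
  obtain ⟨ε, hε, hBA⟩ := mem_zonotope_iff.1 (h (mem_zonotope_iff.2 ⟨δ, hδ, rfl⟩))
  calc ∑ k, max ((u ᵥ* B) k) 0 = u ⬝ᵥ (B *ᵥ δ) := by rw [dotProduct_mulVec, hδeq]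
    _ = (u ᵥ* A) ⬝ᵥ ε := by rw [hBA, dotProduct_mulVec]
    _ ≤ ∑ j, max ((u ᵥ* A) j) 0 := dotProduct_le_sum_max_zero _ hε

end Zonotope

lemma exists_eq_trace_mul {R m n : Type*} [CommSemiring R] [Fintype m] [Fintype n] [DecidableEq m]
    [DecidableEq n] (f : Matrix m n R →ₗ[R] R) : ∃ P : Matrix n m R, ∀ X, f X = (P * X).trace := by
  refine ⟨of fun j i => f (single i j 1), fun X => ?_⟩
  conv_lhs => rw [matrix_eq_sum_single X]
  simp only [map_sum, trace, Matrix.diag, mul_apply, of_apply]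
  rw [Finset.sum_comm]
  refine Finset.sum_congr rfl fun j _ => Finset.sum_congr rfl fun i _ => ?_
  have : single i j (X i j) = X i j • single i j (1 : R) := by
    rw [smul_single, smul_eq_mul, mul_one]
  rw [this, map_smul, smul_eq_mul, mul_comm]

theorem exists_rowStochastic_mul_eq_of_forall_trace_le {d n m : ℕ} [Nonempty (Fin m)]
    (A : Matrix (Fin d) (Fin n) ℝ) (B : Matrix (Fin d) (Fin m) ℝ)
    (h : ∀ P : Matrix (Fin m) (Fin d) ℝ,
      (P * B).trace ≤ ∑ j, univ.sup' univ_nonempty fun k => (P * A) k j) :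
    ∃ M, RowStochastic M ∧ A * M = B := by
  by_contra hB
  have : LocallyConvexSpace ℝ (Matrix (Fin d) (Fin m) ℝ) :=
    inferInstanceAs (LocallyConvexSpace ℝ (Fin d → Fin m → ℝ))
  obtain ⟨f, u, hfS, hfB⟩ := geometric_hahn_banach_closed_point
    (convex_setOf_rowStochastic.linear_image (mulLeftLinearMap (Fin m) ℝ A))
    (isCompact_setOf_rowStochastic.image (continuous_const.matrix_mul continuous_id)).isClosed
    (fun ⟨M, hM, hAM⟩ => hB ⟨M, hM, hAM⟩)
  obtain ⟨P, hP⟩ : ∃ P : Matrix (Fin m) (Fin d) ℝ, ∀ X, f X = (P * X).trace :=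
    exists_eq_trace_mul f.toLinearMap
  -- the maximiser of `tr (P * A * M)`: each row of `M` charges an argmax of its column of `P * A`
  choose κ _ hκ using fun j => exists_mem_eq_sup' univ_nonempty fun k => (P * A) k j
  have hfM := hfS _ ⟨_, rowStochastic_of_pi_single κ, rfl⟩
  simp only [mulLeftLinearMap_apply, hP, ← Matrix.mul_assoc, trace_mul_of_pi_single] at hfM
  have hPB := h P
  simp only [hκ] at hPB
  rw [hP] at hfB
  linarith

lemma max_sub_max_zero_of_le {r t : ℝ} (s : ℝ) (hrt : r ≤ t) :
    max (t - max s r) 0 = max (t - s) 0 - max (r - s) 0 := by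
  rcases le_total s r with h | h
  · rw [max_eq_right h, max_eq_left (sub_nonneg.2 hrt), max_eq_left (by linarith : 0 ≤ t - s),
      max_eq_left (sub_nonneg.2 h)]
    ring
  · rw [max_eq_left h, max_eq_right (by linarith : r - s ≤ 0), sub_zero]

/-- `a` is the slope of `f` near `-∞`; it is tracked so that `max_affine` can tell whether an
affine piece of smaller slope is dominated or becomes the leftmost piece. -/
def HasHingeExpansion (f : ℝ → ℝ) (a b : ℝ) : Prop :=
  ∃ (N : ℕ) (c s : Fin N → ℝ), (∀ i, 0 ≤ c i) ∧ ∀ t, f t = a * t + b + ∑ i, c i * max (t - s i) 0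

namespace HasHingeExpansion

variable {f : ℝ → ℝ} {a b a' b' : ℝ}

lemma affine (a b : ℝ) : HasHingeExpansion (fun t => a * t + b) a b :=
  ⟨0, Fin.elim0, Fin.elim0, Fin.rec0, by simp⟩

lemma continuous (h : HasHingeExpansion f a b) : Continuous f := by
  obtain ⟨N, c, s, -, hf⟩ := h
  rw [funext hf]
  fun_prop

lemma monotone_sub_affine (h : HasHingeExpansion f a b) (ha : a' ≤ a) :
    Monotone fun t => f t - (a' * t + b') := by
  obtain ⟨N, c, s, hc, hf⟩ := h
  intro t t' htt'
  simp only [hf]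
  have := Finset.sum_le_sum fun i (_ : i ∈ univ) =>
    mul_le_mul_of_nonneg_left (max_le_max_right 0 (sub_le_sub_right htt' (s i))) (hc i)
  nlinarith

/-- The affine piece of smaller slope takes over to the left of a crossing point `r`, which
becomes a new hinge of weight `a - a'`. -/
lemma max_affine_of_eq (h : HasHingeExpansion f a b) (ha : a' ≤ a) {r : ℝ}
    (hr : f r = a' * r + b') : HasHingeExpansion (fun t => max (a' * t + b') (f t)) a' b' := by
  have hmono := h.monotone_sub_affine (b' := b') ha
  obtain ⟨N, c, s, hc, hf⟩ := h
  refine ⟨N + 1, Fin.cons (a - a') c, Fin.cons r fun i => max (s i) r,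
    Fin.cases (sub_nonneg.2 ha) hc, fun t => ?_⟩
  simp only [Fin.sum_univ_succ, Fin.cons_zero, Fin.cons_succ]
  rcases le_total t r with htr | hrt
  · have hft : f t ≤ a' * t + b' := by have := hmono htr; simp only at this; linarith
    have hzero : ∀ i, max (t - max (s i) r) 0 = 0 := fun i =>
      max_eq_right (by linarith [le_max_right (s i) r])
    simp [max_eq_left hft, hzero, max_eq_right (sub_nonpos.2 htr)]
  · have hft : a' * t + b' ≤ f t := by have := hmono hrt; simp only at this; linarith
    rw [max_eq_left (sub_nonneg.2 hrt), max_eq_right hft]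
    simp only [max_sub_max_zero_of_le _ hrt, mul_sub, Finset.sum_sub_distrib]
    rw [hf] at hr ⊢
    linarith

lemma max_affine (h : HasHingeExpansion f a b) (ha : a' ≤ a) :
    HasHingeExpansion (fun t => max (a' * t + b') (f t)) a b ∨
      HasHingeExpansion (fun t => max (a' * t + b') (f t)) a' b' := by
  by_cases hle : ∀ t, a' * t + b' ≤ f t
  · left
    simpa only [max_eq_right (hle _)] using h
  right
  by_cases hge : ∀ t, f t ≤ a' * t + b'
  · simpa only [max_eq_left (hge _)] using affine a' b'
  obtain ⟨t₀, ht₀⟩ := not_forall.1 hle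
  obtain ⟨t₁, ht₁⟩ := not_forall.1 hge
  rw [not_le] at ht₀ ht₁
  have hmono := h.monotone_sub_affine (b' := b') ha
  have ht₀₁ : t₀ ≤ t₁ := by
    by_contra! hlt
    have := hmono hlt.le
    simp only at this
    linarith
  have hcont : Continuous fun t => f t - (a' * t + b') := by
    have := h.continuous
    fun_prop
  obtain ⟨r, -, hr⟩ := intermediate_value_Icc ht₀₁ hcont.continuousOn
    (show (0 : ℝ) ∈ Set.Icc _ _ from ⟨by linarith, by linarith⟩)
  exact h.max_affine_of_eq ha (sub_eq_zero.1 hr)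

end HasHingeExpansion

theorem exists_hasHingeExpansion_sup' {ι : Type*} (α β : ι → ℝ) (K : Finset ι) (hK : K.Nonempty) :
    ∃ k ∈ K, HasHingeExpansion (fun t => K.sup' hK fun k => α k * t + β k) (α k) (β k) := by
  classical
  induction K using Finset.induction_on_min_value α with
  | empty => exact absurd hK Finset.not_nonempty_empty
  | insert a s ha hmin ih =>
    rcases s.eq_empty_or_nonempty with rfl | hs
    · exact ⟨a, mem_insert_self a ∅, by simpa using HasHingeExpansion.affine (α a) (β a)⟩
    obtain ⟨k, hk, hexp⟩ := ih hs
    simp only [Finset.sup'_insert hs]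
    rcases hexp.max_affine (hmin k hk) with h | h
    · exact ⟨k, mem_insert_of_mem hk, h⟩
    · exact ⟨a, mem_insert_self a s, h⟩

theorem exists_sup'_dotProduct_eq_hinge {κ : Type*} [Fintype κ] [Nonempty κ] (p : κ → Fin 2 → ℝ) :
    ∃ (ℓ : Fin 2 → ℝ) (N : ℕ) (c : Fin N → ℝ) (u : Fin N → Fin 2 → ℝ), (∀ i, 0 ≤ c i) ∧
      ∀ x, 0 ≤ x → univ.sup' univ_nonempty (fun k => p k ⬝ᵥ x) =
        ℓ ⬝ᵥ x + ∑ i, c i * max (u i ⬝ᵥ x) 0 := by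
  obtain ⟨k, -, N, c, s, hc, hexp⟩ :=
    exists_hasHingeExpansion_sup' (fun k => p k 0 - p k 1) (fun k => p k 1) univ univ_nonempty
  refine ⟨![p k 0, p k 1], N, c, fun i => ![1 - s i, -s i], hc, fun x hx => ?_⟩
  have hx₀ : 0 ≤ x 0 := hx 0
  have hx₁ : 0 ≤ x 1 := hx 1
  simp only [dotProduct, Fin.sum_univ_two, Matrix.cons_val_zero, Matrix.cons_val_one]
  rcases (add_nonneg hx₀ hx₁).eq_or_lt with hw | hw
  · obtain ⟨h₀, h₁⟩ : x 0 = 0 ∧ x 1 = 0 := ⟨by linarith, by linarith⟩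
    simp [h₀, h₁]
  set w := x 0 + x 1
  -- positive homogeneity reduces to the segment `x 0 + x 1 = 1`, parametrised by `t = x 0 / w`
  have hlin : ∀ k, p k 0 * x 0 + p k 1 * x 1 = w * ((p k 0 - p k 1) * (x 0 / w) + p k 1) := by
    intro k; field_simp; ring
  have hhinge : ∀ i, w * (c i * max (x 0 / w - s i) 0) =
      c i * max ((1 - s i) * x 0 + -s i * x 1) 0 := by
    intro i
    rw [mul_left_comm, mul_max_of_nonneg _ _ hw.le, mul_zero]
    congr 2
    field_simp
    ring
  calc univ.sup' univ_nonempty (fun k => p k 0 * x 0 + p k 1 * x 1)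
      = w * univ.sup' univ_nonempty (fun k => (p k 0 - p k 1) * (x 0 / w) + p k 1) := by
        simp only [hlin, mul₀_sup' hw.le]
    _ = w * ((p k 0 - p k 1) * (x 0 / w) + p k 1 + ∑ i, c i * max (x 0 / w - s i) 0) :=
        congrArg (w * ·) (hexp _)
    _ = _ := by
        rw [mul_add, Finset.mul_sum]
        simp only [hhinge]
        congr 1
        field_simp
        ring

theorem sum_hinge_vecMul_le {d ι κ : Type*} [Fintype d] [Fintype ι] [Fintype κ]
    {A : Matrix d ι ℝ} {B : Matrix d κ ℝ} (hsum : B *ᵥ 1 = A *ᵥ 1)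
    (hpos : ∀ u, ∑ k, max ((u ᵥ* B) k) 0 ≤ ∑ j, max ((u ᵥ* A) j) 0)
    (ℓ : d → ℝ) {N : ℕ} {c : Fin N → ℝ} (hc : ∀ i, 0 ≤ c i) (u : Fin N → d → ℝ) :
    ∑ k, ((ℓ ᵥ* B) k + ∑ i, c i * max ((u i ᵥ* B) k) 0) ≤
      ∑ j, ((ℓ ᵥ* A) j + ∑ i, c i * max ((u i ᵥ* A) j) 0) := by
  have hlin : ∑ k, (ℓ ᵥ* B) k = ∑ j, (ℓ ᵥ* A) j := by
    rw [← dotProduct_one, ← dotProduct_one, ← dotProduct_mulVec, ← dotProduct_mulVec, hsum]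
  simp only [Finset.sum_add_distrib, hlin, Finset.sum_comm (γ := κ), Finset.sum_comm (γ := ι),
    ← Finset.mul_sum]
  gcongr with i
  · exact hc i
  · exact hpos (u i)

theorem trace_mul_le_sum_sup' {ι κ : Type*} [Fintype ι] [Fintype κ] [Nonempty κ]
    {A : Matrix (Fin 2) ι ℝ} {B : Matrix (Fin 2) κ ℝ} (hA : ∀ i j, 0 ≤ A i j)
    (hB : ∀ i k, 0 ≤ B i k) (hsum : B *ᵥ 1 = A *ᵥ 1)
    (hpos : ∀ u, ∑ k, max ((u ᵥ* B) k) 0 ≤ ∑ j, max ((u ᵥ* A) j) 0) (P : Matrix κ (Fin 2) ℝ) :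
    (P * B).trace ≤ ∑ j, univ.sup' univ_nonempty fun k => (P * A) k j := by
  obtain ⟨ℓ, N, c, u, hc, hφ⟩ := exists_sup'_dotProduct_eq_hinge P
  calc (P * B).trace = ∑ k, P k ⬝ᵥ Bᵀ k := rfl
    _ ≤ ∑ k, univ.sup' univ_nonempty fun k' => P k' ⬝ᵥ Bᵀ k :=
        Finset.sum_le_sum fun k _ => Finset.le_sup' (fun k' => P k' ⬝ᵥ Bᵀ k) (mem_univ k)
    _ = ∑ k, ((ℓ ᵥ* B) k + ∑ i, c i * max ((u i ᵥ* B) k) 0) :=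
        Finset.sum_congr rfl fun k _ => hφ _ fun i => hB i k
    _ ≤ ∑ j, ((ℓ ᵥ* A) j + ∑ i, c i * max ((u i ᵥ* A) j) 0) := sum_hinge_vecMul_le hsum hpos ℓ hc u
    _ = ∑ j, univ.sup' univ_nonempty fun k => (P * A) k j :=
        Finset.sum_congr rfl fun j _ => (hφ _ fun i => hA i j).symm

/-- Comparison of dichotomies: matrix majorization `A ≻ B` holds iff the zonotope of `B`
is contained in the zonotope of `A`. -/
theorem majorization_iff_zonotope_subset
    (n m : ℕ) (A : Matrix (Fin 2) (Fin n) ℝ) (B : Matrix (Fin 2) (Fin m) ℝ)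
    (hA : RowStochastic A) (hB : RowStochastic B) :
    (∃ M : Matrix (Fin n) (Fin m) ℝ, RowStochastic M ∧ A * M = B) ↔
      zonotope B ⊆ zonotope A := by
  refine ⟨fun ⟨M, hM, hAM⟩ => hAM ▸ zonotope_mul_subset A hM, fun h => ?_⟩
  have : Nonempty (Fin m) := hB.nonempty
  exact exists_rowStochastic_mul_eq_of_forall_trace_le A B fun P =>
    trace_mul_le_sum_sup' hA.1 hB.1 (hB.mulVec_one.trans hA.mulVec_one.symm)
      (sum_max_vecMul_le_of_zonotope_subset h) P
end
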